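/- Let M be the 3×3 matrix [[1,1,2],[1,0,0],[0,1,0]] (with entries regarded as quaternions) and let R be the 3×3 quaternion matrix [[JQ^{(3)}_4, JQ^{(3)}_3 + 2JQ^{(3)}_2, 2JQ^{(3)}_3], [JQ^{(3)}_3, JQ^{(3)}_2 + 2JQ^{(3)}_1, 2JQ^{(3)}_2], [JQ^{(3)}_2, JQ^{(3)}_1 + 2JQ^{(3)}_0, 2JQ^{(3)}_1]]. Then for every integer n ≥ 0, R·M^n = [[JQ^{(3)}_{n+4}, JQ^{(3)}_{n+3} + 2JQ^{(3)}_{n+2}, 2JQ^{(3)}_{n+3}], [JQ^{(3)}_{n+3}, JQ^{(3)}_{n+2} + 2JQ^{(3)}_{n+1}, 2JQ^{(3)}_{n+2}], [JQ^{(3)}_{n+2}, JQ^{(3)}_{n+1} + 2JQ^{(3)}_n, 2JQ^{(3)}_{n+1}]]. -/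

import Mathlib

open Quaternion

/-- Third order Jacobsthal numbers. -/
def J3 : ℕ → ℤ
  | 0 => 0
  | 1 => 1
  | 2 => 1
  | n + 3 => J3 (n + 2) + J3 (n + 1) + 2 * J3 n

/-- Third order Jacobsthal-Lucas numbers. -/
def jL3 : ℕ → ℤ
  | 0 => 2
  | 1 => 1
  | 2 => 5
  | n + 3 => jL3 (n + 2) + jL3 (n + 1) + 2 * jL3 n

/-- The quaternion unit `i`. -/
noncomputable def qi : ℍ[ℝ] := ⟨0, 1, 0, 0⟩
/-- The quaternion unit `j`. -/
noncomputable def qj : ℍ[ℝ] := ⟨0, 0, 1, 0⟩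
/-- The quaternion unit `k`. -/
noncomputable def qk : ℍ[ℝ] := ⟨0, 0, 0, 1⟩

/-- The `n`-th third order Jacobsthal quaternion. -/
noncomputable def JQ (n : ℕ) : ℍ[ℝ] :=
  (J3 n : ℝ) + (J3 (n + 1) : ℝ) * qi + (J3 (n + 2) : ℝ) * qj + (J3 (n + 3) : ℝ) * qk

/-- The `n`-th third order Jacobsthal-Lucas quaternion. -/
noncomputable def jQ (n : ℕ) : ℍ[ℝ] :=
  (jL3 n : ℝ) + (jL3 (n + 1) : ℝ) * qi + (jL3 (n + 2) : ℝ) * qj + (jL3 (n + 3) : ℝ) * qk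

/-- The generating matrix `M` of the third order Jacobsthal sequence,
with entries regarded as quaternions. -/
noncomputable def Mmat : Matrix (Fin 3) (Fin 3) ℍ[ℝ] :=
  !![1, 1, 2; 1, 0, 0; 0, 1, 0]

/-- The third order Jacobsthal quaternion matrix `R`. -/
noncomputable def Rmat : Matrix (Fin 3) (Fin 3) ℍ[ℝ] :=
  !![JQ 4, JQ 3 + 2 * JQ 2, 2 * JQ 3;
     JQ 3, JQ 2 + 2 * JQ 1, 2 * JQ 2;
     JQ 2, JQ 1 + 2 * JQ 0, 2 * JQ 1]


/-!
Each row of `R * M ^ n` has the shape `(u (m + 2), u (m + 1) + 2 * u m, 2 * u (m + 1))`, and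
right multiplication by `M` turns this row for `m` into the one for `m + 1` as soon as `u` obeys
the recurrence. The quaternions `JQ n` obey it because they are sums of shifts of the integer
sequence `J3` multiplied on the right by the constant units `i`, `j`, `k`; the coefficients
`1, 1, 2` of the recurrence are central, so noncommutativity never enters.
-/

section Jacobsthal

variable {R S : Type*} [Semiring R] [Semiring S] {u v : ℕ → R}

def IsJacobsthal3 (u : ℕ → R) : Prop :=
  ∀ n, u (n + 3) = u (n + 2) + u (n + 1) + 2 * u n

namespace IsJacobsthal3

theorem add (hu : IsJacobsthal3 u) (hv : IsJacobsthal3 v) : IsJacobsthal3 (u + v) :=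
  fun n => by simp only [Pi.add_apply, hu n, hv n, mul_add]; abel

theorem mul_const (hu : IsJacobsthal3 u) (c : R) : IsJacobsthal3 (fun n => u n * c) :=
  fun n => by simp only [hu n, add_mul, mul_assoc]

theorem comp_add_right (hu : IsJacobsthal3 u) (k : ℕ) : IsJacobsthal3 (fun n => u (n + k)) :=
  fun n => by simpa only [Nat.add_right_comm _ k] using hu (n + k)

theorem map (hu : IsJacobsthal3 u) (f : R →+* S) : IsJacobsthal3 (f ∘ u) :=
  fun n => by simp only [Function.comp_apply, hu n, map_add, map_mul, map_ofNat]

end IsJacobsthal3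

def jacobsthalMatrix (u : ℕ → R) (n : ℕ) : Matrix (Fin 3) (Fin 3) R :=
  !![u (n + 4), u (n + 3) + 2 * u (n + 2), 2 * u (n + 3);
     u (n + 3), u (n + 2) + 2 * u (n + 1), 2 * u (n + 2);
     u (n + 2), u (n + 1) + 2 * u n, 2 * u (n + 1)]

theorem IsJacobsthal3.jacobsthalMatrix_mul (hu : IsJacobsthal3 u) (n : ℕ) :
    jacobsthalMatrix u n * !![1, 1, 2; 1, 0, 0; 0, 1, 0] = jacobsthalMatrix u (n + 1) := by
  have hu' (k : ℕ) : u (k + 3) = u (k + 2) + (u (k + 1) + 2 * u k) := by rw [hu, add_assoc]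
  have two_comm (x : R) : x * 2 = 2 * x := (Nat.cast_commute 2 x).symm.eq
  ext i j
  fin_cases i <;> fin_cases j <;>
    simp [jacobsthalMatrix, Matrix.mul_apply, Fin.sum_univ_three, two_comm, hu' n, hu' (n + 1),
      hu' (n + 2)]

theorem IsJacobsthal3.jacobsthalMatrix_zero_mul_pow (hu : IsJacobsthal3 u) (n : ℕ) :
    jacobsthalMatrix u 0 * !![1, 1, 2; 1, 0, 0; 0, 1, 0] ^ n = jacobsthalMatrix u n := by
  induction n with
  | zero => rw [pow_zero, mul_one]
  | succ n ih => rw [pow_succ, ← mul_assoc, ih, hu.jacobsthalMatrix_mul]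

end Jacobsthal

theorem isJacobsthal3_J3 : IsJacobsthal3 J3 := fun _ => rfl

theorem isJacobsthal3_JQ : IsJacobsthal3 JQ := by
  have hJ := isJacobsthal3_J3.map ((algebraMap ℝ ℍ[ℝ]).comp (Int.castRingHom ℝ))
  exact ((hJ.add ((hJ.comp_add_right 1).mul_const qi)).add
    ((hJ.comp_add_right 2).mul_const qj)).add ((hJ.comp_add_right 3).mul_const qk)

theorem third_order_jacobsthal_quaternion_matrix_identity (n : ℕ) :
    Rmat * Mmat ^ n =
      !![JQ (n + 4), JQ (n + 3) + 2 * JQ (n + 2), 2 * JQ (n + 3);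
         JQ (n + 3), JQ (n + 2) + 2 * JQ (n + 1), 2 * JQ (n + 2);
         JQ (n + 2), JQ (n + 1) + 2 * JQ n, 2 * JQ (n + 1)] :=
  isJacobsthal3_JQ.jacobsthalMatrix_zero_mul_pow n
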